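/- Every index set Λ whose pattern subspace B_Λ generates se(n) as a Lie algebra satisfies |Λ| ≥ n, and this bound is attained: there exists an index set Λ with |Λ| = n such that B_Λ generates se(n) as a Lie algebra. Moreover, any Λ attaining the bound consists of exactly n−1 pairs (i,j) with j ≤ n, whose edges form a spanning tree of {1,...,n}, together with exactly one pair of the form (k,n+1). -/

import Mathlib

open Matrix

/-!
Common setup: real (n+1)×(n+1) matrices (rows/columns indexed by `Fin (n+1)`,
where index `i : Fin n` cast via `Fin.castSucc` plays the role of `i ∈ {1,…,n}`
and `Fin.last n` plays the role of the index `n+1`), the Lie bracket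
`⁅A,B⁆ = A*B - B*A`, the matrices `Ω̃_{ij}` and `E_{k,n+1}`, the Lie algebra
`se(n)`, index sets `Λ`, pattern subspaces `B_Λ`, graphs with solid/broken
edges, the one-step transitive closure, and derived distributions.
-/

/-- The ambient space of real (n+1)×(n+1) matrices. -/
abbrev Mat (n : ℕ) := Matrix (Fin (n + 1)) (Fin (n + 1)) ℝ

/-- `Ω̃_{ij}`: 1 in entry (i,j), −1 in entry (j,i), 0 elsewhere (indices among 1,…,n). -/
def Omega {n : ℕ} (i j : Fin n) : Mat n :=
  Matrix.single i.castSucc j.castSucc 1 - Matrix.single j.castSucc i.castSucc 1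

/-- `E_{k,n+1}`: 1 in entry (k, n+1), 0 elsewhere. -/
def Ecol {n : ℕ} (k : Fin n) : Mat n :=
  Matrix.single k.castSucc (Fin.last n) 1

/-- The set se(n): matrices whose (n+1)-th row is zero and with
`M(i,j) = −M(j,i)` for all 1 ≤ i,j ≤ n. -/
def seSet (n : ℕ) : Set (Mat n) :=
  {M | (∀ j, M (Fin.last n) j = 0) ∧
    ∀ i j : Fin n, M i.castSucc j.castSucc = - M j.castSucc i.castSucc}

/-- se(n) as a real subspace of the (n+1)×(n+1) matrices. -/
def seL (n : ℕ) : Submodule ℝ (Mat n) where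
  carrier := seSet n
  add_mem' := by
    rintro a b ⟨ha1, ha2⟩ ⟨hb1, hb2⟩
    refine ⟨fun j => ?_, fun i j => ?_⟩
    · simp [Matrix.add_apply, ha1 j, hb1 j]
    · simp only [Matrix.add_apply, ha2 i j, hb2 i j]; ring
  zero_mem' := by
    refine ⟨fun j => ?_, fun i j => ?_⟩ <;> simp
  smul_mem' := by
    rintro c a ⟨ha1, ha2⟩
    refine ⟨fun j => ?_, fun i j => ?_⟩
    · simp [Matrix.smul_apply, ha1 j]
    · simp only [Matrix.smul_apply, ha2 i j, smul_neg]

/-- Kronecker delta (real-valued). -/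
def kron {n : ℕ} (p q : Fin n) : ℝ := if p = q then 1 else 0

/-- An index set Λ: a set of pairs (p,q) with p < q, i.e. a subset of
`{(i,j) : 1 ≤ i < j ≤ n} ∪ {(k, n+1) : 1 ≤ k ≤ n}`. -/
def IndexSet {n : ℕ} (Λ : Set (Fin (n + 1) × Fin (n + 1))) : Prop :=
  ∀ e ∈ Λ, e.1 < e.2

/-- The generating set `{Ω̃_{ij} : (i,j) ∈ Λ, j ≤ n} ∪ {E_{k,n+1} : (k,n+1) ∈ Λ}`. -/
def genSet {n : ℕ} (Λ : Set (Fin (n + 1) × Fin (n + 1))) : Set (Mat n) :=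
  {M | (∃ i j : Fin n, (i.castSucc, j.castSucc) ∈ Λ ∧ M = Omega i j) ∨
    (∃ k : Fin n, (k.castSucc, Fin.last n) ∈ Λ ∧ M = Ecol k)}

/-- The pattern subspace `B_Λ`. -/
def BLam {n : ℕ} (Λ : Set (Fin (n + 1) × Fin (n + 1))) : Submodule ℝ (Mat n) :=
  Submodule.span ℝ (genSet Λ)

attribute [local instance 100] LieRing.ofAssociativeRing LieAlgebra.ofAssociativeAlgebra

/-- `B_Λ` generates `se(n)` as a Lie algebra: the smallest real subspace containing
`B_Λ` and closed under the bracket (i.e. the Lie subalgebra generated by `B_Λ`)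
equals `se(n)`. -/
def GeneratesSE (n : ℕ) (Λ : Set (Fin (n + 1) × Fin (n + 1))) : Prop :=
  (LieSubalgebra.lieSpan ℝ (Mat n) (BLam Λ : Set (Mat n)) : Set (Mat n)) = seSet n

/-- A graph on vertices {1,…,n+1} recorded by its solid and broken adjacency relations. -/
structure SBGraph (n : ℕ) where
  solid : Fin (n + 1) → Fin (n + 1) → Prop
  broken : Fin (n + 1) → Fin (n + 1) → Prop

/-- A well-formed solid/broken graph: simple and symmetric; solid edges have both
endpoints among 1,…,n, broken edges have one endpoint equal to n+1. -/
def SBGraph.Good {n : ℕ} (G : SBGraph n) : Prop :=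
  (∀ p q, G.solid p q → G.solid q p) ∧ (∀ p q, G.solid p q → p ≠ q) ∧
  (∀ p q, G.solid p q → p ≠ Fin.last n ∧ q ≠ Fin.last n) ∧
  (∀ p q, G.broken p q → G.broken q p) ∧ (∀ p q, G.broken p q → p ≠ q) ∧
  (∀ p q, G.broken p q → p = Fin.last n ∨ q = Fin.last n)

/-- The one-step closure: for distinct vertices i,j,k, add a solid edge {i,k} whenever
{i,j} and {j,k} are both solid, and a broken edge {i,k} whenever one of {i,j},{j,k} is
solid and the other is broken (nothing is added when both are broken). -/
def SBGraph.step {n : ℕ} (G : SBGraph n) : SBGraph n where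
  solid := fun i k => G.solid i k ∨
    (∃ j, i ≠ j ∧ j ≠ k ∧ i ≠ k ∧ G.solid i j ∧ G.solid j k)
  broken := fun i k => G.broken i k ∨
    (∃ j, i ≠ j ∧ j ≠ k ∧ i ≠ k ∧
      ((G.solid i j ∧ G.broken j k) ∨ (G.broken i j ∧ G.solid j k)))

/-- The l-th transitive closure `G^{(l)}`. -/
def SBGraph.closure {n : ℕ} (G : SBGraph n) (l : ℕ) : SBGraph n :=
  (fun H => SBGraph.step H)^[l] G

/-- `G` is the complete graph on the n+1 vertices: every pair of distinct vertices
is joined by a (solid or broken) edge. -/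
def SBGraph.IsComplete {n : ℕ} (G : SBGraph n) : Prop :=
  ∀ p q : Fin (n + 1), p ≠ q → G.solid p q ∨ G.broken p q

/-- The graph `G(B_Λ)` associated with a pattern: solid edges {i,j} for (i,j) ∈ Λ with
j ≤ n, broken edges {k,n+1} for (k,n+1) ∈ Λ. -/
def patternGraph {n : ℕ} (Λ : Set (Fin (n + 1) × Fin (n + 1))) : SBGraph n where
  solid := fun p q => ∃ i j : Fin n, (i.castSucc, j.castSucc) ∈ Λ ∧
    ((p = i.castSucc ∧ q = j.castSucc) ∨ (p = j.castSucc ∧ q = i.castSucc))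
  broken := fun p q => ∃ k : Fin n, (k.castSucc, Fin.last n) ∈ Λ ∧
    ((p = k.castSucc ∧ q = Fin.last n) ∨ (p = Fin.last n ∧ q = k.castSucc))

/-- One step of the derived-distribution construction:
`D ↦ D + span{[A₁,A₂] : A₁,A₂ ∈ D}`. -/
def derivedStep {n : ℕ} (D : Submodule ℝ (Mat n)) : Submodule ℝ (Mat n) :=
  D ⊔ Submodule.span ℝ {M | ∃ A B, A ∈ D ∧ B ∈ D ∧ M = A * B - B * A}

/-- The i-th derived distribution `D^{(i)}`. -/
def derivedIter {n : ℕ} (D : Submodule ℝ (Mat n)) (i : ℕ) : Submodule ℝ (Mat n) :=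
  (fun S => derivedStep S)^[i] D

/-!
Take any map `b` from the indices to a linear order that is constant along solid edges and has
`b k ≤ b (n+1)` along broken edges. Then every generator of `B_Λ` is block triangular for `b`, and
block-triangular matrices form an associative, hence a Lie, subalgebra; so if `B_Λ` generates
`se(n)`, every element of `se(n)` is block triangular for `b`. Testing `Ω̃_{ij}` against the
indicator of a solid component (with `n+1` on top) shows that the solid edges connect `{1,…,n}`,
and testing `E_{k,n+1}` against the indicator of `{1,…,n}` shows that some broken edge exists.
Hence `|Λ| ≥ (n-1) + 1`, and equality forces a spanning tree plus one broken edge.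

Conversely the star at vertex `1` together with `(1,n+1)` generates `se(n)`, because
`⁅Ω̃_{1i}, Ω̃_{1j}⁆ = -Ω̃_{ij}` and `⁅Ω̃_{1k}, E_{1,n+1}⁆ = -E_{k,n+1}`.
-/

variable {n : ℕ}

lemma omega_apply (i j : Fin n) (p q : Fin (n + 1)) :
    Omega i j p q = (if i.castSucc = p ∧ j.castSucc = q then (1 : ℝ) else 0)
      - (if j.castSucc = p ∧ i.castSucc = q then (1 : ℝ) else 0) := by
  simp [Omega, single_apply]

lemma ecol_apply (k : Fin n) (p q : Fin (n + 1)) :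
    Ecol k p q = if k.castSucc = p ∧ Fin.last n = q then (1 : ℝ) else 0 := by
  simp [Ecol, single_apply]

lemma omega_apply_castSucc {i j : Fin n} (hij : i ≠ j) :
    Omega i j i.castSucc j.castSucc = 1 := by
  simp [omega_apply, hij]

lemma ecol_apply_castSucc_last (k : Fin n) : Ecol k k.castSucc (Fin.last n) = 1 := by
  simp [ecol_apply]

lemma omega_self (i : Fin n) : Omega i i = 0 := by simp [Omega]

lemma omega_swap (i j : Fin n) : Omega j i = -Omega i j := by simp [Omega]

lemma omega_mem_seSet (i j : Fin n) : Omega i j ∈ seSet n := by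
  refine ⟨fun q => by simp [omega_apply], fun a b => ?_⟩
  simp only [omega_apply, Fin.castSucc_inj]
  split_ifs <;> grind

lemma ecol_mem_seSet (k : Fin n) : Ecol k ∈ seSet n :=
  ⟨fun q => by simp [ecol_apply], fun a b => by simp [ecol_apply, (Fin.castSucc_lt_last _).ne']⟩

lemma genSet_subset_seSet (Λ : Set (Fin (n + 1) × Fin (n + 1))) : genSet Λ ⊆ seSet n := by
  rintro M (⟨i, j, -, rfl⟩ | ⟨k, -, rfl⟩)
  exacts [omega_mem_seSet i j, ecol_mem_seSet k]

lemma mul_apply_castSucc_of_last_row_eq_zero (A : Mat n) {B : Mat n}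
    (hB : ∀ q, B (Fin.last n) q = 0) (p : Fin (n + 1)) (j : Fin n) :
    (A * B) p j.castSucc = ∑ m : Fin n, A p m.castSucc * B m.castSucc j.castSucc := by
  simp [Matrix.mul_apply, Fin.sum_univ_castSucc, hB]

def seLieSubalgebra (n : ℕ) : LieSubalgebra ℝ (Mat n) :=
  { seL n with
    lie_mem' := by
      rintro x y ⟨hx1, hx2⟩ ⟨hy1, hy2⟩
      rw [Ring.lie_def]
      refine ⟨fun q => by simp [Matrix.mul_apply, hx1, hy1], fun i j => ?_⟩
      simp only [Matrix.sub_apply, mul_apply_castSucc_of_last_row_eq_zero _ hx1,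
        mul_apply_castSucc_of_last_row_eq_zero _ hy1, ← Finset.sum_sub_distrib,
        ← Finset.sum_neg_distrib]
      refine Finset.sum_congr rfl fun m _ => ?_
      rw [hx2 i m, hy2 m j, hy2 i m, hx2 m j]
      ring }

lemma lieSpan_BLam_subset_seSet (Λ : Set (Fin (n + 1) × Fin (n + 1))) :
    (LieSubalgebra.lieSpan ℝ (Mat n) (BLam Λ : Set (Mat n)) : Set (Mat n)) ⊆ seSet n :=
  LieSubalgebra.lieSpan_le (K := seLieSubalgebra n).2 (Submodule.span_le.2 (genSet_subset_seSet Λ))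

lemma Matrix.single_one_mul_single_one {ι R : Type*} [Fintype ι] [DecidableEq ι] [Semiring R]
    (p q r t : ι) : single p q (1 : R) * single r t 1 = if q = r then single p t 1 else 0 := by
  split_ifs with h
  · rw [h, single_mul_single_same, one_mul]
  · simp [h]

lemma lie_omega_omega {a b c : Fin n} (hab : a ≠ b) (hac : a ≠ c) (hbc : b ≠ c) :
    ⁅Omega a b, Omega a c⁆ = -Omega b c := by
  simp only [Ring.lie_def, Omega, sub_mul, mul_sub, single_one_mul_single_one, Fin.castSucc_inj,
    if_neg hab, if_neg hac, if_neg hbc, if_neg hab.symm, if_neg hac.symm, if_neg hbc.symm,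
    if_true]
  abel

lemma lie_omega_ecol {a b : Fin n} (hab : a ≠ b) : ⁅Omega a b, Ecol a⁆ = -Ecol b := by
  simp only [Ring.lie_def, Omega, Ecol, sub_mul, mul_sub, single_one_mul_single_one,
    Fin.castSucc_inj, if_neg hab.symm, (Fin.castSucc_lt_last _).ne', if_false, if_true]
  abel

lemma eq_sum_omega_add_sum_ecol {M : Mat n} (hM : M ∈ seSet n) :
    M = (∑ i : Fin n, ∑ j : Fin n, ((1 : ℝ) / 2 * M i.castSucc j.castSucc) • Omega i j)
      + ∑ k : Fin n, M k.castSucc (Fin.last n) • Ecol k := by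
  obtain ⟨hlast, hskew⟩ := hM
  ext p q
  induction p using Fin.lastCases with
  | last => simp [Matrix.sum_apply, omega_apply, ecol_apply, hlast]
  | cast a =>
    induction q using Fin.lastCases with
    | last => simp [Matrix.sum_apply, omega_apply, ecol_apply]
    | cast b =>
      simp [Matrix.sum_apply, omega_apply, ecol_apply, ite_and, Finset.sum_ite_eq', mul_sub,
        Finset.sum_sub_distrib, (Fin.castSucc_lt_last _).ne']
      linarith [hskew a b]

lemma seSet_subset_of_omega_ecol_mem (K : LieSubalgebra ℝ (Mat n)) (c : Fin n)
    (hO : ∀ j, Omega c j ∈ K) (hE : Ecol c ∈ K) : seSet n ⊆ K := by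
  have hO' : ∀ i j, Omega i j ∈ K := fun i j => by
    obtain rfl | hic := eq_or_ne i c
    · exact hO j
    obtain rfl | hjc := eq_or_ne j c
    · rw [omega_swap]
      exact K.neg_mem (hO i)
    obtain rfl | hij := eq_or_ne i j
    · simp [omega_self]
    simpa [lie_omega_omega hic.symm hjc.symm hij] using K.neg_mem (K.lie_mem (hO i) (hO j))
  have hE' : ∀ k, Ecol k ∈ K := fun k => by
    obtain rfl | hkc := eq_or_ne k c
    · exact hE
    simpa [lie_omega_ecol hkc.symm] using K.neg_mem (K.lie_mem (hO k) hE)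
  intro M hM
  rw [SetLike.mem_coe, ← LieSubalgebra.mem_toSubmodule, eq_sum_omega_add_sum_ecol hM]
  exact add_mem (sum_mem fun i _ => sum_mem fun j _ => Submodule.smul_mem _ _ (hO' i j))
    (sum_mem fun k _ => Submodule.smul_mem _ _ (hE' k))

def starPattern (n : ℕ) [NeZero n] : Set (Fin (n + 1) × Fin (n + 1)) :=
  Set.range fun j : Fin n => ((0 : Fin n).castSucc, if j = 0 then Fin.last n else j.castSucc)

section Star

variable [NeZero n]

lemma indexSet_starPattern : IndexSet (starPattern n) := by
  rintro _ ⟨j, rfl⟩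
  dsimp only
  split_ifs with hj
  · exact Fin.castSucc_lt_last 0
  · exact Fin.castSucc_lt_castSucc_iff.2 (Fin.pos_iff_ne_zero.2 hj)

lemma ncard_starPattern : (starPattern n).ncard = n := by
  rw [starPattern, ← Set.image_univ, Set.ncard_image_of_injective, Set.ncard_univ, Nat.card_fin]
  intro a b hab
  simp only [Prod.mk.injEq, true_and] at hab
  split_ifs at hab with ha hb hb
  · rw [ha, hb]
  · exact absurd hab.symm (Fin.castSucc_lt_last b).ne
  · exact absurd hab (Fin.castSucc_lt_last a).ne
  · exact Fin.castSucc_injective _ hab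

lemma generatesSE_starPattern : GeneratesSE n (starPattern n) := by
  set K := LieSubalgebra.lieSpan ℝ (Mat n) (BLam (starPattern n) : Set (Mat n))
  have hgen : ∀ M ∈ genSet (starPattern n), M ∈ K :=
    fun M hM => LieSubalgebra.subset_lieSpan (Submodule.subset_span hM)
  refine (lieSpan_BLam_subset_seSet _).antisymm (seSet_subset_of_omega_ecol_mem K 0 (fun j => ?_) ?_)
  · obtain rfl | hj := eq_or_ne j 0
    · simp [omega_self]
    exact hgen _ (Or.inl ⟨0, j, ⟨j, by simp [hj]⟩, rfl⟩)
  · exact hgen _ (Or.inr ⟨0, ⟨0, by simp⟩, rfl⟩)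

end Star

section BlockTriangular

variable {α : Type*}

lemma omega_blockTriangular [Preorder α] {b : Fin (n + 1) → α} {i j : Fin n}
    (h : b i.castSucc = b j.castSucc) : (Omega i j).BlockTriangular b :=
  (blockTriangular_single h.le 1).sub (blockTriangular_single h.ge 1)

lemma ecol_blockTriangular [Preorder α] {b : Fin (n + 1) → α} {k : Fin n}
    (h : b k.castSucc ≤ b (Fin.last n)) : (Ecol k).BlockTriangular b :=
  blockTriangular_single h 1

variable [LinearOrder α] {b : Fin (n + 1) → α}

lemma Matrix.BlockTriangular.le_of_omega {i j : Fin n} (h : (Omega i j).BlockTriangular b)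
    (hij : i ≠ j) : b i.castSucc ≤ b j.castSucc :=
  not_lt.1 fun hlt => by simpa [omega_apply_castSucc hij] using h hlt

lemma Matrix.BlockTriangular.le_last_of_ecol {k : Fin n} (h : (Ecol k).BlockTriangular b) :
    b k.castSucc ≤ b (Fin.last n) :=
  not_lt.1 fun hlt => by simpa [ecol_apply_castSucc_last] using h hlt

theorem GeneratesSE.blockTriangular {Λ : Set (Fin (n + 1) × Fin (n + 1))} (hG : GeneratesSE n Λ)
    (hsolid : ∀ i j : Fin n, (i.castSucc, j.castSucc) ∈ Λ → b i.castSucc = b j.castSucc)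
    (hbroken : ∀ k : Fin n, (k.castSucc, Fin.last n) ∈ Λ → b k.castSucc ≤ b (Fin.last n))
    {M : Mat n} (hM : M ∈ seSet n) : M.BlockTriangular b := by
  let A := lieSubalgebraOfSubalgebra ℝ (Mat n) (blockTriangularSubalgebra ℝ ℝ b)
  have hgen : genSet Λ ⊆ A := by
    rintro M (⟨i, j, hij, rfl⟩ | ⟨k, hk, rfl⟩)
    exacts [omega_blockTriangular (hsolid i j hij), ecol_blockTriangular (hbroken k hk)]
  rw [← hG] at hM
  exact LieSubalgebra.lieSpan_le.2 (Submodule.span_le.2 hgen) hM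

end BlockTriangular

def solidGraph (Λ : Set (Fin (n + 1) × Fin (n + 1))) : SimpleGraph (Fin n) :=
  SimpleGraph.fromRel fun i j => (i.castSucc, j.castSucc) ∈ Λ

variable {Λ : Set (Fin (n + 1) × Fin (n + 1))}

lemma IndexSet.solidGraph_adj (hI : IndexSet Λ) {i j : Fin n}
    (h : (i.castSucc, j.castSucc) ∈ Λ) : (solidGraph Λ).Adj i j :=
  (SimpleGraph.fromRel_adj _ _ _).2 ⟨fun hij => (hI _ h).ne (by rw [hij]), Or.inl h⟩

theorem GeneratesSE.solidGraph_connected (hn : 1 ≤ n) (hI : IndexSet Λ) (hG : GeneratesSE n Λ) :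
    (solidGraph Λ).Connected := by
  have : Nonempty (Fin n) := ⟨⟨0, hn⟩⟩
  refine (SimpleGraph.connected_iff _).2 ⟨fun i j => ?_, inferInstance⟩
  obtain rfl | hij := eq_or_ne i j
  · rfl
  -- `Prop` is linearly ordered by implication.
  let b : Fin (n + 1) → Prop := Fin.lastCases True fun k => (solidGraph Λ).Reachable i k
  have hsolid : ∀ i' j' : Fin n, (i'.castSucc, j'.castSucc) ∈ Λ →
      b i'.castSucc = b j'.castSucc := fun i' j' h => by
    have hadj := hI.solidGraph_adj h
    simpa [b] using ⟨fun hr => hr.trans hadj.reachable, fun hr => hr.trans hadj.symm.reachable⟩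
  have hbroken : ∀ k : Fin n, (k.castSucc, Fin.last n) ∈ Λ → b k.castSucc ≤ b (Fin.last n) :=
    fun k _ => by simp [b]
  simpa [b] using (hG.blockTriangular hsolid hbroken (omega_mem_seSet i j)).le_of_omega hij

theorem GeneratesSE.exists_broken (hn : 1 ≤ n) (hG : GeneratesSE n Λ) :
    ∃ k : Fin n, (k.castSucc, Fin.last n) ∈ Λ := by
  by_contra! h
  let b : Fin (n + 1) → Prop := fun p => p ≠ Fin.last n
  have hsolid : ∀ i j : Fin n, (i.castSucc, j.castSucc) ∈ Λ → b i.castSucc = b j.castSucc :=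
    fun i j _ => by simp [b, (Fin.castSucc_lt_last _).ne]
  have := (hG.blockTriangular hsolid (fun k hk => absurd hk (h k))
    (ecol_mem_seSet ⟨0, hn⟩)).le_last_of_ecol
  exact this (Fin.castSucc_lt_last _).ne rfl

lemma SimpleGraph.ncard_edgeSet_fromRel_le {V : Type*} [Finite V] (r : V → V → Prop) :
    (fromRel r).edgeSet.ncard ≤ {e : V × V | r e.1 e.2}.ncard := by
  have hsub : (fromRel r).edgeSet ⊆ (fun e : V × V => s(e.1, e.2)) '' {e | r e.1 e.2} := by
    rintro ⟨a, b⟩ he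
    obtain ⟨-, h | h⟩ := (fromRel_adj _ _ _).1 he
    exacts [⟨(a, b), h, rfl⟩, ⟨(b, a), h, Sym2.eq_swap⟩]
  exact (Set.ncard_le_ncard hsub ((Set.toFinite _).image _)).trans
    (Set.ncard_image_le (Set.toFinite _))

lemma ncard_edgeSet_solidGraph_le (Λ : Set (Fin (n + 1) × Fin (n + 1))) :
    (solidGraph Λ).edgeSet.ncard ≤ {e ∈ Λ | e.2 ≠ Fin.last n}.ncard := by
  refine (SimpleGraph.ncard_edgeSet_fromRel_le _).trans
    (Set.ncard_le_ncard_of_injOn (Prod.map Fin.castSucc Fin.castSucc) ?_ ?_)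
  · exact fun e he => ⟨he, (Fin.castSucc_lt_last _).ne⟩
  · exact ((Fin.castSucc_injective _).prodMap (Fin.castSucc_injective _)).injOn

lemma ncard_eq_ncard_solid_add_ncard_broken (Λ : Set (Fin (n + 1) × Fin (n + 1))) :
    Λ.ncard = {e ∈ Λ | e.2 ≠ Fin.last n}.ncard + {e ∈ Λ | e.2 = Fin.last n}.ncard := by
  rw [← Set.ncard_inter_add_ncard_sdiff_eq_ncard Λ {e | e.2 = Fin.last n}, add_comm]
  rfl

theorem GeneratesSE.sub_one_le_ncard_solid (hn : 1 ≤ n) (hI : IndexSet Λ) (hG : GeneratesSE n Λ) :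
    n - 1 ≤ {e ∈ Λ | e.2 ≠ Fin.last n}.ncard := by
  have := (hG.solidGraph_connected hn hI).card_vert_le_card_edgeSet_add_one
  have := ncard_edgeSet_solidGraph_le Λ
  simp only [Nat.card_fin, Nat.card_coe_set_eq] at *
  omega

theorem GeneratesSE.one_le_ncard_broken (hn : 1 ≤ n) (hG : GeneratesSE n Λ) :
    1 ≤ {e ∈ Λ | e.2 = Fin.last n}.ncard := by
  obtain ⟨k, hk⟩ := hG.exists_broken hn
  exact (Set.ncard_pos (Set.toFinite _)).2 ⟨_, hk, rfl⟩

theorem GeneratesSE.isTree_solidGraph (hn : 1 ≤ n) (hI : IndexSet Λ) (hG : GeneratesSE n Λ)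
    (hcard : {e ∈ Λ | e.2 ≠ Fin.last n}.ncard ≤ n - 1) : (solidGraph Λ).IsTree := by
  have hconn := hG.solidGraph_connected hn hI
  have := hconn.card_vert_le_card_edgeSet_add_one
  have := ncard_edgeSet_solidGraph_le Λ
  refine SimpleGraph.isTree_iff_connected_and_card.2 ⟨hconn, ?_⟩
  simp only [Nat.card_fin, Nat.card_coe_set_eq] at *
  omega

/-- Every index set Λ with B_Λ generating se(n) satisfies |Λ| ≥ n;
the bound is attained; and any Λ attaining it consists of exactly n−1 pairs (i,j) with
j ≤ n whose edges form a spanning tree of {1,…,n}, together with exactly one pair (k,n+1). -/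
theorem stmt12 (n : ℕ) (hn : 1 ≤ n) :
    (∀ Λ : Set (Fin (n + 1) × Fin (n + 1)), IndexSet Λ → GeneratesSE n Λ →
      n ≤ Λ.ncard) ∧
    (∃ Λ : Set (Fin (n + 1) × Fin (n + 1)), IndexSet Λ ∧ GeneratesSE n Λ ∧
      Λ.ncard = n) ∧
    (∀ Λ : Set (Fin (n + 1) × Fin (n + 1)), IndexSet Λ → GeneratesSE n Λ →
      Λ.ncard = n →
      {e ∈ Λ | e.2 ≠ Fin.last n}.ncard = n - 1 ∧
      (SimpleGraph.fromRel (fun i j : Fin n => (i.castSucc, j.castSucc) ∈ Λ)).Connected ∧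
      (SimpleGraph.fromRel (fun i j : Fin n => (i.castSucc, j.castSucc) ∈ Λ)).IsAcyclic ∧
      {e ∈ Λ | e.2 = Fin.last n}.ncard = 1) := by
  have : NeZero n := ⟨by omega⟩
  refine ⟨fun Λ hI hG => ?_, ⟨starPattern n, indexSet_starPattern, generatesSE_starPattern,
    ncard_starPattern⟩, fun Λ hI hG hcard => ?_⟩
  · have := hG.sub_one_le_ncard_solid hn hI
    have := hG.one_le_ncard_broken hn
    rw [ncard_eq_ncard_solid_add_ncard_broken]
    omega
  · have hsolid := hG.sub_one_le_ncard_solid hn hI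
    have hbroken := hG.one_le_ncard_broken hn
    rw [ncard_eq_ncard_solid_add_ncard_broken] at hcard
    have htree := hG.isTree_solidGraph hn hI (by omega)
    exact ⟨by omega, htree.connected, htree.isAcyclic, by omega⟩
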